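/- arXiv:1410.2530 — 2 statements merged into one kernel-verified Lean document; each statement's English description precedes it below -/
import Mathlib

section
/- Let ζ = exp(2πi/5). There is no integer k and no sign ε ∈ {1, −1} such that (ζ² − 1)⁴ = ε · ζᵏ · (ζ − 1)⁴ in ℂ. The same holds with ζ² replaced by ζ⁻². -/
open Complex Real

/-!
Taking absolute values kills the unit `ε ζᵏ`, so such an identity would force
`|ζ² - 1| = |ζ - 1|` (and `|ζ⁻² - 1| = |ζ - 1|`). But `|e^{ix} - 1| = 2 |sin (x / 2)|`, so these
chords have lengths `2 sin (2π/5)` and `2 sin (π/5)`, which differ.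
-/

theorem norm_exp_I_mul_ofReal_zpow_sub_one (x : ℝ) (m : ℤ) :
    ‖exp (I * x) ^ m - 1‖ = |2 * Real.sin (m * x / 2)| := by
  rw [← Complex.exp_int_mul, ← Real.norm_eq_abs, ← norm_exp_I_mul_ofReal_sub_one]
  push_cast
  ring_nf

theorem norm_eq_of_pow_eq_mul_pow {𝕜 : Type*} [NormedDivisionRing 𝕜] {a b c : 𝕜} {n : ℕ}
    (hn : n ≠ 0) (hc : ‖c‖ = 1) (h : a ^ n = c * b ^ n) : ‖a‖ = ‖b‖ := by
  have hnorm := congrArg norm h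
  rw [norm_mul, hc, one_mul, norm_pow, norm_pow] at hnorm
  exact (pow_left_inj₀ (norm_nonneg a) (norm_nonneg b) hn).1 hnorm

theorem not_exists_sign_mul_zpow_mul_pow {𝕜 : Type*} [NormedDivisionRing 𝕜] {u a b : 𝕜}
    {n : ℕ} (hn : n ≠ 0) (hu : ‖u‖ = 1) (hab : ‖a‖ ≠ ‖b‖) :
    ¬ ∃ (k : ℤ) (ε : 𝕜), (ε = 1 ∨ ε = -1) ∧ a ^ n = ε * u ^ k * b ^ n := by
  rintro ⟨k, ε, hε, h⟩
  have hε : ‖ε‖ = 1 := by rcases hε with rfl | rfl <;> simp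
  refine hab (norm_eq_of_pow_eq_mul_pow hn ?_ h)
  rw [norm_mul, norm_zpow, hε, hu, one_zpow, one_mul]

theorem sin_pi_div_five_pos : 0 < Real.sin (π / 5) :=
  sin_pos_of_pos_of_lt_pi (by positivity) (by linarith [pi_pos])

theorem sin_pi_div_five_lt_sin_two_pi_div_five : Real.sin (π / 5) < Real.sin (2 * π / 5) :=
  sin_lt_sin_of_lt_of_le_pi_div_two (by linarith [pi_pos]) (by linarith [pi_pos])
    (by linarith [pi_pos])

/-- Let ζ = exp(2πi/5). There is no integer k and sign ε ∈ {1,−1} with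
(ζ² − 1)⁴ = ε·ζᵏ·(ζ − 1)⁴; the same holds with ζ² replaced by ζ⁻². -/
theorem stmt_1 (ζ : ℂ) (hζ : ζ = Complex.exp (2 * Real.pi * Complex.I / 5)) :
    (¬ ∃ (k : ℤ) (ε : ℂ), (ε = 1 ∨ ε = -1) ∧
        (ζ ^ 2 - 1) ^ 4 = ε * ζ ^ k * (ζ - 1) ^ 4) ∧
    (¬ ∃ (k : ℤ) (ε : ℂ), (ε = 1 ∨ ε = -1) ∧
        (ζ ^ (-2 : ℤ) - 1) ^ 4 = ε * ζ ^ k * (ζ - 1) ^ 4) := by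
  replace hζ : ζ = exp (I * ↑(2 * π / 5)) := by rw [hζ]; push_cast; ring_nf
  have hnorm : ‖ζ‖ = 1 := by rw [hζ, norm_exp_I_mul_ofReal]
  have hnorm_zpow (m : ℤ) : ‖ζ ^ m - 1‖ = |2 * Real.sin (m * π / 5)| := by
    rw [hζ, norm_exp_I_mul_ofReal_zpow_sub_one]; ring_nf
  have hlt := sin_pi_div_five_lt_sin_two_pi_div_five
  have hpos := sin_pi_div_five_pos
  have h1 : ‖ζ - 1‖ = 2 * Real.sin (π / 5) := by
    simpa [abs_of_pos hpos] using hnorm_zpow 1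
  have h2 : ‖ζ ^ 2 - 1‖ = 2 * Real.sin (2 * π / 5) := by
    simpa [abs_of_pos (hpos.trans hlt)] using hnorm_zpow 2
  have h2_neg : ‖ζ ^ (-2 : ℤ) - 1‖ = 2 * Real.sin (2 * π / 5) := by
    simpa [neg_div, abs_of_pos (hpos.trans hlt)] using hnorm_zpow (-2)
  have hne : 2 * Real.sin (2 * π / 5) ≠ 2 * Real.sin (π / 5) := by linarith
  exact ⟨not_exists_sign_mul_zpow_mul_pow four_ne_zero hnorm (by rwa [h1, h2]),
    not_exists_sign_mul_zpow_mul_pow four_ne_zero hnorm (by rwa [h1, h2_neg])⟩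
end

section
/- Let u : ℤ/5 → 𝕌 be the character sending the generator t to ζ = exp(2πi/5), extended to a ring homomorphism χ : ℤ[t]/(t⁵−1) → ℂ with χ(t) = ζ. Then χ((t−1)²·(t−1)²) = (ζ−1)⁴, and for the automorphism σ of ℤ[t]/(t⁵−1) determined by t ↦ t², χ(σ((t−1)⁴)) = (ζ²−1)⁴ ≠ ±ζᵏ (ζ−1)⁴ for all k ∈ ℤ. -/
open Polynomial

/-- The group ring ℤ[t]/(t⁵ − 1) of ℤ/5, modeled as a quotient of ℤ[X]. -/
abbrev GroupRingZ5 : Type :=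
  Polynomial ℤ ⧸ Ideal.span ({(X : Polynomial ℤ) ^ 5 - 1} : Set (Polynomial ℤ))

/-- The class of t in ℤ[t]/(t⁵ − 1). -/
noncomputable abbrev tZ5 : GroupRingZ5 :=
  Ideal.Quotient.mk _ (X : Polynomial ℤ)

/-!
Since `ζ² − 1 = (ζ + 1)(ζ − 1)` and `ζ ≠ 1`, an identity `(ζ² − 1)⁴ = u (ζ − 1)⁴` forces
`(ζ + 1)⁴ = u`. For `u = ±ζᵏ` this has modulus one, whereas `‖ζ + 1‖ ≥ Re ζ + 1 > 1`
because `Re ζ = cos (2π/5) > 0`.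
-/

namespace Complex

lemma one_lt_norm_add_one {z : ℂ} (hz : 0 < z.re) : 1 < ‖z + 1‖ :=
  calc 1 < (z + 1).re := by simpa using hz
    _ ≤ ‖z + 1‖ := re_le_norm _

lemma sq_sub_one_pow_ne_mul_sub_one_pow {z u : ℂ} (hz₁ : z ≠ 1) (hz : 0 < z.re)
    (hu : ‖u‖ = 1) {n : ℕ} (hn : n ≠ 0) : (z ^ 2 - 1) ^ n ≠ u * (z - 1) ^ n := by
  intro h
  have hsub : (z - 1) ^ n ≠ 0 := pow_ne_zero _ (sub_ne_zero.mpr hz₁)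
  have hu' : (z + 1) ^ n = u := by
    apply mul_right_cancel₀ hsub
    rw [← h, ← mul_pow]
    ring
  have := one_lt_pow₀ (one_lt_norm_add_one hz) hn
  rw [← norm_pow, hu', hu] at this
  exact this.false

lemma exp_two_pi_I_div_five_re_pos : 0 < (exp (2 * Real.pi * I / 5)).re := by
  have : (2 * Real.pi * I / 5 : ℂ) = (2 * Real.pi / 5 : ℝ) * I := by push_cast; ring
  rw [this, exp_ofReal_mul_I_re]
  apply Real.cos_pos_of_mem_Ioo
  constructor <;> linarith [Real.pi_pos]

end Complex

/-- For the ring homomorphism χ : ℤ[t]/(t⁵−1) → ℂ with χ(t) = ζ = exp(2πi/5) and the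
automorphism σ with σ(t) = t², we have χ((t−1)²·(t−1)²) = (ζ−1)⁴,
χ(σ((t−1)⁴)) = (ζ²−1)⁴, and (ζ²−1)⁴ ≠ ±ζᵏ(ζ−1)⁴ for all k ∈ ℤ. -/
theorem stmt_8 (ζ : ℂ) (hζ : ζ = Complex.exp (2 * Real.pi * Complex.I / 5))
    (χ : GroupRingZ5 →+* ℂ) (hχ : χ tZ5 = ζ)
    (σ : GroupRingZ5 →+* GroupRingZ5) (hσ : σ tZ5 = tZ5 ^ 2) :
    χ ((tZ5 - 1) ^ 2 * (tZ5 - 1) ^ 2) = (ζ - 1) ^ 4 ∧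
    χ (σ ((tZ5 - 1) ^ 4)) = (ζ ^ 2 - 1) ^ 4 ∧
    ∀ k : ℤ, (ζ ^ 2 - 1) ^ 4 ≠ ζ ^ k * (ζ - 1) ^ 4 ∧
      (ζ ^ 2 - 1) ^ 4 ≠ -(ζ ^ k * (ζ - 1) ^ 4) := by
  have hprim : IsPrimitiveRoot ζ 5 := hζ ▸ Complex.isPrimitiveRoot_exp 5 (by norm_num)
  have hre : 0 < ζ.re := hζ ▸ Complex.exp_two_pi_I_div_five_re_pos
  have hζ₁ : ζ ≠ 1 := hprim.ne_one (by norm_num)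
  have hnorm (k : ℤ) : ‖ζ ^ k‖ = 1 := by
    rw [norm_zpow, hprim.norm'_eq_one (by norm_num), one_zpow]
  refine ⟨?_, ?_, fun k => ⟨?_, ?_⟩⟩
  · simp only [← pow_add, map_pow, map_sub, map_one, hχ]
  · simp only [map_pow, map_sub, map_one, hσ, hχ]
  · exact Complex.sq_sub_one_pow_ne_mul_sub_one_pow hζ₁ hre (hnorm k) (by norm_num)
  · rw [← neg_mul]
    exact Complex.sq_sub_one_pow_ne_mul_sub_one_pow hζ₁ hre (by rw [norm_neg, hnorm]) (by norm_num)
end
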